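/- Let E be a parameter set, (X, τ, E) a soft topological space, and {(Y_s, τ'_s, E)}_{s ∈ S} a family of soft topological spaces. For each s let C_s = C(X, Y_s) be the set of soft continuous maps X → Y_s, and let D = C(X, Π s, Y_s) be the set of soft continuous maps from X to the soft product (E × (Π s, Y_s) carrying the product soft topology). Define Δ : (Π s, C_s) → D by Δ(F) = (fun x => fun s => F s x) (this is well defined: Δ(F) is soft continuous into the product soft topology). Then the soft mapping (Δ, 1_E), i.e. the map (e, F) ↦ (e, Δ F) : E × (Π s, C_s) → E × D, is a homeomorphism, where E × (Π s, C_s) carries the product soft topology of the pointwise soft topologies on the E × C_s, and E × D carries the pointwise soft topology. -/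

import Mathlib

/-!
Both sides carry the initial topology for the evaluations `(e, F) ↦ (e, F s x)` into
`(E × Y s, τ' s)`, and `Δ` commutes with these evaluations. So `Δ` and its inverse, which
splits a map into the product into its components, are continuous by the universal property
of initial topologies.
-/

/-- The product soft topology on `E × (Π s, Y s)`: the initial topology with respect to
the projection soft maps `(e, y) ↦ (e, y s)`. -/
def softProdTop {E S : Type*} {Y : S → Type*}
    (τ : ∀ s, TopologicalSpace (E × Y s)) : TopologicalSpace (E × ∀ s, Y s) :=
  ⨅ s, TopologicalSpace.induced (fun p : E × ∀ s, Y s => (p.1, p.2 s)) (τ s)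

/-- The set of soft continuous maps from `(X, τ, E)` to `(Y, τ', E)`. -/
def SoftCont {E X Y : Type*} (τ : TopologicalSpace (E × X)) (τ' : TopologicalSpace (E × Y)) :=
  {f : X → Y // @Continuous _ _ τ τ' (Prod.map id f)}

/-- The pointwise soft topology on `E × C(X,Y)`. -/
def pointwiseSoftTop {E X Y : Type*} (τ : TopologicalSpace (E × X))
    (τ' : TopologicalSpace (E × Y)) : TopologicalSpace (E × SoftCont τ τ') :=
  ⨅ x : X, TopologicalSpace.induced (fun p : E × SoftCont τ τ' => (p.1, p.2.1 x)) τ'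

/-- `Δ` is well defined: for a family of soft continuous maps `F s : X → Y s`, the map
`x ↦ (fun s => F s x)` is soft continuous into the soft product. -/
theorem delta_softCont {E S X : Type*} {Y : S → Type*}
    (τ : TopologicalSpace (E × X)) (τ' : ∀ s, TopologicalSpace (E × Y s))
    (F : ∀ s, SoftCont τ (τ' s)) :
    @Continuous _ _ τ (softProdTop τ')
      (Prod.map id (fun x => fun s => (F s).1 x)) := by
  refine continuous_iInf_rng.2 fun s => ?_
  rw [continuous_induced_rng]
  exact (F s).2

section

variable {E Z : Type*} [TopologicalSpace Z]

theorem continuous_softProdTop_iff {S : Type*} {Y : S → Type*}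
    {τ' : ∀ s, TopologicalSpace (E × Y s)} {f : Z → E × ∀ s, Y s} :
    @Continuous _ _ _ (softProdTop τ') f ↔
      ∀ s, @Continuous _ _ _ (τ' s) fun z => ((f z).1, (f z).2 s) :=
  continuous_iInf_rng.trans <| forall_congr' fun _ => continuous_induced_rng

theorem continuous_pointwiseSoftTop_iff {X Y : Type*} {τ : TopologicalSpace (E × X)}
    {τ' : TopologicalSpace (E × Y)} {f : Z → E × SoftCont τ τ'} :
    @Continuous _ _ _ (pointwiseSoftTop τ τ') f ↔
      ∀ x, @Continuous _ _ _ τ' fun z => ((f z).1, (f z).2.1 x) :=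
  continuous_iInf_rng.trans <| forall_congr' fun _ => continuous_induced_rng

end

def SoftCont.component {E S X : Type*} {Y : S → Type*} {τ : TopologicalSpace (E × X)}
    {τ' : ∀ s, TopologicalSpace (E × Y s)} (g : SoftCont τ (softProdTop τ')) (s : S) :
    SoftCont τ (τ' s) :=
  ⟨fun x => g.1 x s, @continuous_softProdTop_iff _ _ τ _ _ _ _ |>.1 g.2 s⟩

/-- `Δ : Π s, C(X, Y s) → C(X, Π s, Y s)`, `Δ(F) = (fun x s => F s x)`, induces a soft
mapping `(Δ, 1_E)` which is a homeomorphism, where `E × (Π s, C(X, Y s))` carries the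
product soft topology of the pointwise soft topologies and `E × C(X, Π s, Y s)` carries
the pointwise soft topology. -/
theorem delta_isHomeomorph {E S X : Type*} {Y : S → Type*}
    (τ : TopologicalSpace (E × X)) (τ' : ∀ s, TopologicalSpace (E × Y s)) :
    @IsHomeomorph (E × ∀ s, SoftCont τ (τ' s)) (E × SoftCont τ (softProdTop τ'))
      (softProdTop (fun s => pointwiseSoftTop τ (τ' s)))
      (pointwiseSoftTop τ (softProdTop τ'))
      (fun p => (p.1, ⟨fun x => fun s => (p.2 s).1 x, delta_softCont τ τ' p.2⟩)) := by
  let _ := softProdTop fun s => pointwiseSoftTop τ (τ' s)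
  let _ := pointwiseSoftTop τ (softProdTop τ')
  rw [isHomeomorph_iff_exists_inverse]
  refine ⟨?_, fun p => (p.1, fun s => p.2.component s), fun _ => rfl, fun _ => rfl, ?_⟩
  · refine continuous_pointwiseSoftTop_iff.2 fun x => continuous_softProdTop_iff.2 fun s => ?_
    have proj := (continuous_softProdTop_iff (τ' := fun s => pointwiseSoftTop τ (τ' s))).1
      continuous_id s
    exact continuous_pointwiseSoftTop_iff.1 proj x
  · refine continuous_softProdTop_iff.2 fun s => continuous_pointwiseSoftTop_iff.2 fun x => ?_
    have eval := (continuous_pointwiseSoftTop_iff (τ := τ) (τ' := softProdTop τ')).1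
      continuous_id x
    exact continuous_softProdTop_iff.1 eval s
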